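/- arXiv:0904.2336 — 7 statements merged into one kernel-verified Lean document; each statement's English description precedes it below -/
import Mathlib

section
/- Let R_A, R_B, R_A'', R_B'' be positive real numbers and D_A, D_B, D_A'', D_B'' real numbers. Set R_E = R_A + R_B, D_E = D_A + D_B, R_E'' = R_A'' + R_B'', D_E'' = D_A'' + D_B'', and for each pair write μ_X = D_X / R_X. Assume μ_B ≥ μ_A, μ_{A''} ≥ μ_A, μ_{B''} ≥ μ_B, and R_E''/R_E ≥ R_A''/R_A. Then μ_{E''} ≥ μ_E. If moreover μ_{A''} > μ_A or μ_{B''} > μ_B, then μ_{E''} > μ_E. -/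
/-!
Writing `t = R_A / R_E`, the slope `μ_E = t μ_A + (1 - t) μ_B` is a convex combination of `μ_A`
and `μ_B`, and likewise `μ_{E''} = s μ_{A''} + (1 - s) μ_{B''}` with `s = R_{A''} / R_{E''}`.
The rank condition says exactly `s ≤ t`. Replacing `μ_{A''}, μ_{B''}` by the smaller `μ_A, μ_B`
lowers `μ_{E''}` (strictly if one of them is strictly smaller, as `0 < s < 1`), and moving the
weight from `s` up to `t` lowers it further, since it shifts weight onto the smaller slope `μ_A`.
-/

lemma add_div_add_eq_mul_div_add_one_sub_mul_div {D₁ D₂ R₁ R₂ : ℝ} (h₁ : R₁ ≠ 0) (h₂ : R₂ ≠ 0)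
    (h : R₁ + R₂ ≠ 0) :
    (D₁ + D₂) / (R₁ + R₂) = R₁ / (R₁ + R₂) * (D₁ / R₁) + (1 - R₁ / (R₁ + R₂)) * (D₂ / R₂) := by
  field_simp
  ring

lemma div_add_le_div_add_iff {a b a' b' : ℝ} (ha : 0 < a) (hab : 0 < a + b) (hab' : 0 < a' + b') :
    a' / (a' + b') ≤ a / (a + b) ↔ a' / a ≤ (a' + b') / (a + b) := by
  rw [div_le_div_iff₀ hab' hab, div_le_div_iff₀ ha hab, mul_comm a]

lemma mul_add_one_sub_mul_le_of_le {s t x y : ℝ} (hst : s ≤ t) (hxy : x ≤ y) :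
    t * x + (1 - t) * y ≤ s * x + (1 - s) * y := by
  nlinarith

lemma mul_add_one_sub_mul_lt_of_le_of_lt {s x x' y y' : ℝ} (hs₀ : 0 < s) (hs₁ : s < 1)
    (hx : x ≤ x') (hy : y ≤ y') (h : x < x' ∨ y < y') :
    s * x + (1 - s) * y < s * x' + (1 - s) * y' := by
  have hs₁' : 0 < 1 - s := sub_pos.2 hs₁
  rcases h with h | h
  · exact add_lt_add_of_lt_of_le (by gcongr) (by gcongr)
  · exact add_lt_add_of_le_of_lt (by gcongr) (by gcongr)

/-- Slope comparison lemma: ranks are positive reals, degrees reals,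
slope of (D, R) is D/R; (E) = (A)+(B), (E'') = (A'')+(B''). -/
theorem slope_lemma (RA RB RA'' RB'' DA DB DA'' DB'' : ℝ)
    (hRA : 0 < RA) (hRB : 0 < RB) (hRA'' : 0 < RA'') (hRB'' : 0 < RB'')
    (hBA : DB / RB ≥ DA / RA)
    (hA : DA'' / RA'' ≥ DA / RA)
    (hB : DB'' / RB'' ≥ DB / RB)
    (hR : (RA'' + RB'') / (RA + RB) ≥ RA'' / RA) :
    (DA'' + DB'') / (RA'' + RB'') ≥ (DA + DB) / (RA + RB) ∧
    ((DA'' / RA'' > DA / RA ∨ DB'' / RB'' > DB / RB) →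
      (DA'' + DB'') / (RA'' + RB'') > (DA + DB) / (RA + RB)) := by
  have hRE : 0 < RA + RB := by positivity
  have hRE'' : 0 < RA'' + RB'' := by positivity
  rw [add_div_add_eq_mul_div_add_one_sub_mul_div hRA.ne' hRB.ne' hRE.ne',
    add_div_add_eq_mul_div_add_one_sub_mul_div hRA''.ne' hRB''.ne' hRE''.ne']
  set t := RA / (RA + RB)
  set s := RA'' / (RA'' + RB'')
  have hs₀ : 0 < s := by positivity
  have hs₁ : s < 1 := (div_lt_one hRE'').2 (by linarith)
  have hst : s ≤ t := (div_add_le_div_add_iff hRA hRE hRE'').2 hR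
  have hE : t * (DA / RA) + (1 - t) * (DB / RB) ≤ s * (DA / RA) + (1 - s) * (DB / RB) :=
    mul_add_one_sub_mul_le_of_le hst hBA
  refine ⟨?_, fun h => hE.trans_lt (mul_add_one_sub_mul_lt_of_le_of_lt hs₀ hs₁ hA hB h)⟩
  calc t * (DA / RA) + (1 - t) * (DB / RB)
      ≤ s * (DA / RA) + (1 - s) * (DB / RB) := hE
    _ ≤ s * (DA'' / RA'') + (1 - s) * (DB'' / RB'') := by
      have : 0 ≤ 1 - s := by linarith
      gcongr
end

section
/- Let A be a commutative ring, z ∈ A, and M a finite-length A-module with z^n M = 0 for some n. Then for every i ≥ 0, the length of z^i M / z^{i+1} M equals the length of (ann_M(z^{i+1})) / (ann_M(z^i)), where ann_M(z^j) = { m ∈ M : z^j m = 0 }. -/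
/-!
For every `j`, multiplication by `z ^ j` on `M` has kernel `ann_M(z^j)` and image `z^j M`, so
additivity of length gives `ℓ(M) = ℓ(ann_M(z^j)) + ℓ(z^j M)`. Comparing these identities for
`j = i` and `j = i + 1`, and cancelling (all lengths are finite), gives the claim.
-/

/-- The length of a module, defined as the Krull dimension of its lattice of submodules. -/
noncomputable def moduleLength (A : Type*) [Ring A] (M : Type*) [AddCommGroup M]
    [Module A M] : WithBot ℕ∞ :=
  Order.krullDim (Submodule A M)

open LinearMap

section

variable {R M N : Type*} [Ring R] [AddCommGroup M] [Module R M] [AddCommGroup N] [Module R N]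

lemma moduleLength_eq_length : moduleLength R M = Module.length R M :=
  (Module.coe_length R M).symm

lemma Submodule.length_eq_length_add_length_quotient_comap {p q : Submodule R M} (h : p ≤ q) :
    Module.length R q = Module.length R p + Module.length R (q ⧸ p.comap q.subtype) := by
  rw [← (Submodule.comapSubtypeEquivOfLe h).length_eq]
  exact Module.length_eq_add_of_exact _ _ (Submodule.injective_subtype _)
    (Submodule.mkQ_surjective _) (exact_subtype_mkQ _)

lemma LinearMap.length_eq_length_ker_add_length_range (f : M →ₗ[R] N) :
    Module.length R M = Module.length R (ker f) + Module.length R (range f) :=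
  Module.length_eq_add_of_exact (ker f).subtype f.rangeRestrict (ker f).injective_subtype
    f.surjective_rangeRestrict (exact_iff.mpr (by rw [ker_rangeRestrict, Submodule.range_subtype]))

theorem LinearMap.length_range_quotient_eq_length_ker_quotient [IsNoetherian R M] [IsArtinian R M]
    {f g : M →ₗ[R] N} (hrange : range g ≤ range f) (hker : ker f ≤ ker g) :
    Module.length R (range f ⧸ (range g).comap (range f).subtype) =
      Module.length R (ker g ⧸ (ker f).comap (ker g).subtype) := by
  have hf := f.length_eq_length_ker_add_length_range
  have hg := g.length_eq_length_ker_add_length_range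
  rw [Submodule.length_eq_length_add_length_quotient_comap hrange, ← add_assoc] at hf
  rw [Submodule.length_eq_length_add_length_quotient_comap hker, add_right_comm] at hg
  have hfin : Module.length R (ker f) + Module.length R (range g) ≠ ⊤ :=
    ne_top_of_le_ne_top (hf ▸ Module.length_ne_top) le_self_add
  exact WithTop.add_left_cancel hfin (hf.symm.trans hg)

end

theorem length_graded_eq_general (A : Type*) [CommRing A] (M : Type*) [AddCommGroup M] [Module A M]
    (z : A) (hM : IsFiniteLength A M) (i : ℕ) :
    moduleLength A
      ((LinearMap.range (LinearMap.lsmul A M (z ^ i))) ⧸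
        (Submodule.comap (LinearMap.range (LinearMap.lsmul A M (z ^ i))).subtype
          (LinearMap.range (LinearMap.lsmul A M (z ^ (i + 1)))))) =
    moduleLength A
      ((Submodule.torsionBy A M (z ^ (i + 1))) ⧸
        (Submodule.comap (Submodule.torsionBy A M (z ^ (i + 1))).subtype
          (Submodule.torsionBy A M (z ^ i)))) := by
  obtain ⟨_, _⟩ := isFiniteLength_iff_isNoetherian_isArtinian.mp hM
  have hrange : range (lsmul A M (z ^ (i + 1))) ≤ range (lsmul A M (z ^ i)) := by
    rintro _ ⟨m, rfl⟩
    exact ⟨z • m, by simp only [lsmul_apply, ← mul_smul, ← pow_succ]⟩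
  have hker : ker (lsmul A M (z ^ i)) ≤ ker (lsmul A M (z ^ (i + 1))) :=
    Submodule.torsionBy_le_torsionBy_of_dvd _ _ (pow_dvd_pow z i.le_succ)
  rw [moduleLength_eq_length, moduleLength_eq_length]
  exact congrArg _ (length_range_quotient_eq_length_ker_quotient hrange hker)

/-- For a finite-length module `M` over a commutative ring with `z ^ n • M = 0`, the length of
`z^i M / z^{i+1} M` equals the length of `ann_M(z^{i+1}) / ann_M(z^i)`. -/
theorem length_graded_eq (A : Type*) [CommRing A] (M : Type*) [AddCommGroup M] [Module A M]
    (z : A) (n : ℕ) (hz : ∀ m : M, z ^ n • m = 0) (hM : IsFiniteLength A M) (i : ℕ) :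
    moduleLength A
      ((LinearMap.range (LinearMap.lsmul A M (z ^ i))) ⧸
        (Submodule.comap (LinearMap.range (LinearMap.lsmul A M (z ^ i))).subtype
          (LinearMap.range (LinearMap.lsmul A M (z ^ (i + 1)))))) =
    moduleLength A
      ((Submodule.torsionBy A M (z ^ (i + 1))) ⧸
        (Submodule.comap (Submodule.torsionBy A M (z ^ (i + 1))).subtype
          (Submodule.torsionBy A M (z ^ i)))) :=
  length_graded_eq_general A M z hM i
end

section
/- Let R be a discrete valuation ring with uniformizer x, and let A = R[z]/(z^2). Let I = (x, z) ⊆ A be the ideal generated by x and z. Define α : I → A ⊕ A by α(a x + b z) = (−a z, a x + b z) and β : A ⊕ A → I by β(a, b) = a x + b z. Then α is a well-defined injective A-linear map, β is surjective, and the sequence 0 → I → A ⊕ A → I → 0 is exact (the image of α equals the kernel of β). -/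
open Polynomial

/-- The local ring `A = R[z]/(z^2)` of a primitive double curve at a closed point. -/
noncomputable abbrev DoubleCurveLocalRing (R : Type*) [CommRing R] : Type _ :=
  AdjoinRoot (X ^ 2 : R[X])

/-!
Write `β(a, b) = a x + b z` and `γ(c, d) = (-c z, c x + d z)`. In `A = R[z]/(z²)` the annihilator
of `z` is `(z)`, and `x` is a non-zero-divisor on `A/(z) ≅ R`. Hence a relation `a x + b z = 0`
forces `a = c z`, and then `b + c x ∈ Ann z = (z)`: the syzygies `ker β` are exactly the image of
`γ`. In particular `a z = 0` on `ker β`, so `γ` descends along `β : A² ↠ I` to `α`. The second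
component of `α` is the inclusion `I ⊆ A`, so `α` is injective, and `range α = range γ = ker β`.
-/

section PairIdeal

open LinearMap Submodule

variable {A : Type*} [CommRing A] (x z : A)

def pairCombination : A × A →ₗ[A] A :=
  (toSpanSingleton A A x).coprod (toSpanSingleton A A z)

@[simp]
lemma pairCombination_apply (p : A × A) : pairCombination x z p = p.1 * x + p.2 * z := rfl

lemma range_pairCombination : range (pairCombination x z) = Ideal.span {x, z} := by
  rw [pairCombination, range_coprod, range_toSpanSingleton, range_toSpanSingleton,
    Ideal.span, span_insert]

def pairSyzygyMap : A × A →ₗ[A] A × A :=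
  (-(toSpanSingleton A A z ∘ₗ fst A A A)).prod (pairCombination x z)

@[simp]
lemma pairSyzygyMap_apply (p : A × A) :
    pairSyzygyMap x z p = (-(p.1 * z), p.1 * x + p.2 * z) := rfl

def pairCombinationOnto : A × A →ₗ[A] Ideal.span {x, z} :=
  (pairCombination x z).codRestrict _ fun p => range_pairCombination x z ▸ mem_range_self _ p

lemma pairCombinationOnto_surjective : Function.Surjective (pairCombinationOnto x z) := by
  rintro ⟨t, ht⟩
  obtain ⟨p, rfl⟩ := (range_pairCombination x z ▸ ht : t ∈ range (pairCombination x z))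
  exact ⟨p, rfl⟩

variable {x z}

lemma exists_eq_mul_of_mul_add_mul_eq_zero
    (hx : ∀ a, a * x ∈ Ideal.span {z} → a ∈ Ideal.span {z}) {a b : A}
    (hab : a * x + b * z = 0) : ∃ c, c * z = a :=
  Ideal.mem_span_singleton'.mp <| hx a <|
    Ideal.mem_span_singleton'.mpr ⟨-b, by linear_combination -hab⟩

lemma ker_pairCombination_le_ker_pairSyzygyMap (hz : z * z = 0)
    (hx : ∀ a, a * x ∈ Ideal.span {z} → a ∈ Ideal.span {z}) :
    ker (pairCombination x z) ≤ ker (pairSyzygyMap x z) := by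
  rintro ⟨a, b⟩ hab
  rw [mem_ker, pairCombination_apply] at hab
  obtain ⟨c, rfl⟩ := exists_eq_mul_of_mul_add_mul_eq_zero hx hab
  simp only [mem_ker, pairSyzygyMap_apply, hab, Prod.mk_eq_zero, neg_eq_zero, and_true]
  linear_combination c * hz

lemma range_pairSyzygyMap_eq_ker (hz : z * z = 0)
    (hx : ∀ a, a * x ∈ Ideal.span {z} → a ∈ Ideal.span {z})
    (hann : ∀ c, c * z = 0 → c ∈ Ideal.span {z}) :
    range (pairSyzygyMap x z) = ker (pairCombination x z) := by
  refine le_antisymm ?_ fun ⟨a, b⟩ hab => ?_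
  · rintro _ ⟨⟨a, b⟩, rfl⟩
    simp only [mem_ker, pairSyzygyMap_apply, pairCombination_apply]
    linear_combination b * hz
  rw [mem_ker, pairCombination_apply] at hab
  obtain ⟨c, rfl⟩ := exists_eq_mul_of_mul_add_mul_eq_zero hx hab
  obtain ⟨d, hd⟩ := Ideal.mem_span_singleton'.mp <| hann (b + c * x) (by linear_combination hab)
  refine ⟨(-c, d), Prod.ext (by simp) ?_⟩
  show -c * x + d * z = b
  linear_combination hd

noncomputable def pairIdealEmbedding (hz : z * z = 0)
    (hx : ∀ a, a * x ∈ Ideal.span {z} → a ∈ Ideal.span {z}) :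
    Ideal.span {x, z} →ₗ[A] A × A :=
  (ker (pairCombinationOnto x z)).liftQ (pairSyzygyMap x z)
      (by
        rw [pairCombinationOnto, ker_codRestrict]
        exact ker_pairCombination_le_ker_pairSyzygyMap hz hx) ∘ₗ
    ((pairCombinationOnto x z).quotKerEquivOfSurjective (pairCombinationOnto_surjective x z)).symm

variable (hz : z * z = 0) (hx : ∀ a, a * x ∈ Ideal.span {z} → a ∈ Ideal.span {z})

lemma pairIdealEmbedding_apply_pairCombinationOnto (p : A × A) :
    pairIdealEmbedding hz hx (pairCombinationOnto x z p) = pairSyzygyMap x z p := by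
  simp [pairIdealEmbedding]

lemma pairIdealEmbedding_apply (a b : A) (h : a * x + b * z ∈ Ideal.span {x, z}) :
    pairIdealEmbedding hz hx ⟨a * x + b * z, h⟩ = (-(a * z), a * x + b * z) :=
  pairIdealEmbedding_apply_pairCombinationOnto hz hx (a, b)

lemma snd_pairIdealEmbedding (t : Ideal.span {x, z}) : (pairIdealEmbedding hz hx t).2 = t := by
  obtain ⟨p, rfl⟩ := pairCombinationOnto_surjective x z t
  rw [pairIdealEmbedding_apply_pairCombinationOnto]
  rfl

lemma pairIdealEmbedding_injective : Function.Injective (pairIdealEmbedding hz hx) :=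
  fun t t' h => Subtype.ext <| by
    rw [← snd_pairIdealEmbedding hz hx t, h, snd_pairIdealEmbedding]

lemma range_pairIdealEmbedding :
    range (pairIdealEmbedding hz hx) = range (pairSyzygyMap x z) := by
  rw [pairIdealEmbedding, range_comp_of_range_eq_top _ (LinearEquiv.range _), range_liftQ]

end PairIdeal

namespace DoubleCurveLocalRing

variable {R : Type*} [CommRing R]

local notation "z" => AdjoinRoot.root (X ^ 2 : R[X])

lemma root_mul_root : z * z = 0 := by
  rw [← sq, ← AdjoinRoot.mk_X, ← map_pow, AdjoinRoot.mk_self]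

lemma mk_mem_span_root_iff (f : R[X]) :
    AdjoinRoot.mk (X ^ 2) f ∈ Ideal.span {z} ↔ f.coeff 0 = 0 := by
  rw [Ideal.mem_span_singleton', ← X_dvd_iff]
  constructor
  · rintro ⟨c, hc⟩
    obtain ⟨g, rfl⟩ := AdjoinRoot.mk_surjective c
    rw [← AdjoinRoot.mk_X, ← map_mul, AdjoinRoot.mk_eq_mk] at hc
    exact (dvd_sub_right (dvd_mul_left X g)).mp ((dvd_pow_self X two_ne_zero).trans hc)
  · rintro ⟨g, rfl⟩
    exact ⟨AdjoinRoot.mk _ g, by rw [← AdjoinRoot.mk_X, ← map_mul, mul_comm]⟩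

lemma mem_span_root_of_mul_root_eq_zero (c : DoubleCurveLocalRing R) (hc : c * z = 0) :
    c ∈ Ideal.span {z} := by
  obtain ⟨f, rfl⟩ := AdjoinRoot.mk_surjective c
  rw [← AdjoinRoot.mk_X, ← map_mul, AdjoinRoot.mk_eq_zero, X_pow_dvd_iff] at hc
  rw [mk_mem_span_root_iff, ← coeff_mul_X f 0]
  exact hc 1 one_lt_two

lemma mem_span_root_of_mul_algebraMap_mem {ϖ : R} (hϖ : ϖ ∈ nonZeroDivisors R)
    (a : DoubleCurveLocalRing R) (ha : a * algebraMap R _ ϖ ∈ Ideal.span {z}) :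
    a ∈ Ideal.span {z} := by
  obtain ⟨f, rfl⟩ := AdjoinRoot.mk_surjective a
  rw [AdjoinRoot.algebraMap_eq, AdjoinRoot.of, RingHom.comp_apply, ← map_mul,
    mk_mem_span_root_iff, coeff_mul_C] at ha
  rwa [mk_mem_span_root_iff, ← mul_right_mem_nonZeroDivisors_eq_zero_iff hϖ]

end DoubleCurveLocalRing

theorem ideal_point_exact_sequence_general (R : Type*) [CommRing R] [IsDomain R]
    (ϖ : R) (hϖ : Irreducible ϖ) :
    ∀ (x z : DoubleCurveLocalRing R), x = algebraMap R (DoubleCurveLocalRing R) ϖ →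
      z = AdjoinRoot.root (X ^ 2 : R[X]) →
    ∀ (I : Ideal (DoubleCurveLocalRing R)), I = Ideal.span {x, z} →
    ∀ (β : (DoubleCurveLocalRing R × DoubleCurveLocalRing R) →ₗ[DoubleCurveLocalRing R]
        DoubleCurveLocalRing R),
      (∀ a b : DoubleCurveLocalRing R, β (a, b) = a * x + b * z) →
    LinearMap.range β = I ∧
    ∃ α : I →ₗ[DoubleCurveLocalRing R]
        (DoubleCurveLocalRing R × DoubleCurveLocalRing R),
      (∀ (a b : DoubleCurveLocalRing R) (h : a * x + b * z ∈ I),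
          α ⟨a * x + b * z, h⟩ = (-(a * z), a * x + b * z)) ∧
      Function.Injective α ∧
      LinearMap.range α = LinearMap.ker β := by
  intro x z hx hz I hI β hβ
  subst hI
  obtain rfl : β = pairCombination x z := LinearMap.ext fun p => hβ p.1 p.2
  have hzz : z * z = 0 := hz ▸ DoubleCurveLocalRing.root_mul_root
  have hxz : ∀ a, a * x ∈ Ideal.span {z} → a ∈ Ideal.span {z} := hx ▸ hz ▸
    DoubleCurveLocalRing.mem_span_root_of_mul_algebraMap_mem
      (mem_nonZeroDivisors_of_ne_zero hϖ.ne_zero)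
  have hann : ∀ c, c * z = 0 → c ∈ Ideal.span {z} :=
    hz ▸ DoubleCurveLocalRing.mem_span_root_of_mul_root_eq_zero
  refine ⟨range_pairCombination x z, pairIdealEmbedding hzz hxz,
    pairIdealEmbedding_apply hzz hxz, pairIdealEmbedding_injective hzz hxz, ?_⟩
  rw [range_pairIdealEmbedding, range_pairSyzygyMap_eq_ker hzz hxz hann]

/-- On `A = R[z]/(z^2)` with `R` a DVR with uniformizer `x`, the ideal `I = (x, z)` fits in an
exact sequence `0 → I → A ⊕ A → I → 0` where `β(a,b) = ax + bz` and
`α(ax + bz) = (-az, ax + bz)`. -/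
theorem ideal_point_exact_sequence (R : Type*) [CommRing R] [IsDomain R]
    [IsDiscreteValuationRing R] (ϖ : R) (hϖ : Irreducible ϖ) :
    ∀ (x z : DoubleCurveLocalRing R), x = algebraMap R (DoubleCurveLocalRing R) ϖ →
      z = AdjoinRoot.root (X ^ 2 : R[X]) →
    ∀ (I : Ideal (DoubleCurveLocalRing R)), I = Ideal.span {x, z} →
    ∀ (β : (DoubleCurveLocalRing R × DoubleCurveLocalRing R) →ₗ[DoubleCurveLocalRing R]
        DoubleCurveLocalRing R),
      (∀ a b : DoubleCurveLocalRing R, β (a, b) = a * x + b * z) →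
    LinearMap.range β = I ∧
    ∃ α : I →ₗ[DoubleCurveLocalRing R]
        (DoubleCurveLocalRing R × DoubleCurveLocalRing R),
      (∀ (a b : DoubleCurveLocalRing R) (h : a * x + b * z ∈ I),
          α ⟨a * x + b * z, h⟩ = (-(a * z), a * x + b * z)) ∧
      Function.Injective α ∧
      LinearMap.range α = LinearMap.ker β :=
  ideal_point_exact_sequence_general R ϖ hϖ
end

section
/- Let R be a discrete valuation ring with uniformizer x, n ≥ 1, and A = R[z]/(z^n). Let M be a finitely generated A-module which is torsion-free, i.e. no nonzero element of M is annihilated by a power of x. Then M is reflexive: the canonical map M → Hom_A(Hom_A(M, A), A) is an isomorphism. -/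
/-!
`A = R[z]/(z^n)` is a Frobenius `R`-algebra: `z^i` and `z^(n-1-i)` are dual bases under the
pairing `(a, b) ↦ topCoeff (a * b)`, where `topCoeff` reads off the coefficient of `z^(n-1)`.
Hence `f ↦ topCoeff ∘ f` identifies `Hom_A(N, A)` with `Hom_R(N, R)`, naturally in `N`, and an
`A`-module is `A`-reflexive iff it is `R`-reflexive. A finitely generated `x`-torsion-free
`A`-module is finitely generated and torsion-free over the DVR `R`, so free of finite rank
over `R`, hence `R`-reflexive.
-/

open Polynomial

/-- The local ring `A = R[z]/(z^n)` of a primitive multiple curve of multiplicity `n`. -/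
noncomputable abbrev MultCurveLocalRing (R : Type*) [CommRing R] (n : ℕ) : Type _ :=
  AdjoinRoot (X ^ n : R[X])

lemma Module.IsTorsionFree.of_irreducible_pow_smul_eq_zero {R M : Type*} [CommRing R]
    [IsDomain R] [IsDiscreteValuationRing R] [AddCommGroup M] [Module R M] {ϖ : R}
    (hϖ : Irreducible ϖ) (h : ∀ (m : M) (k : ℕ), ϖ ^ k • m = 0 → m = 0) :
    Module.IsTorsionFree R M := by
  refine .of_smul_eq_zero fun r m hrm => or_iff_not_imp_left.2 fun hr => ?_
  obtain ⟨k, u, rfl⟩ := IsDiscreteValuationRing.eq_unit_mul_pow_irreducible hr hϖ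
  rw [mul_smul, ← Units.smul_def, smul_eq_zero_iff_eq] at hrm
  exact h m k hrm

namespace MultCurveLocalRing

variable {R : Type*} [CommRing R] {n : ℕ}

lemma root_pow_eq_zero {k : ℕ} (hk : n ≤ k) : AdjoinRoot.root (X ^ n : R[X]) ^ k = 0 := by
  rw [← pow_sub_mul_pow _ hk, ← AdjoinRoot.mk_X, ← map_pow (AdjoinRoot.mk _) X n,
    AdjoinRoot.mk_self, mul_zero]

variable (R n) in
noncomputable def topCoeff : MultCurveLocalRing R n →ₗ[R] R :=
  (lcoeff R (n - 1)).comp (AdjoinRoot.modByMonicHom (monic_X_pow n))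

variable [Nontrivial R]

variable (R n) in
noncomputable def basis : Module.Basis (Fin n) R (MultCurveLocalRing R n) :=
  (AdjoinRoot.powerBasis' (monic_X_pow n)).basis.reindex (finCongr (natDegree_X_pow n))

lemma basis_apply (i : Fin n) : basis R n i = AdjoinRoot.root (X ^ n : R[X]) ^ (i : ℕ) := by
  simp [basis, finCongr]

lemma topCoeff_root_pow (k : ℕ) :
    topCoeff R n (AdjoinRoot.root (X ^ n : R[X]) ^ k) = if k + 1 = n then 1 else 0 := by
  rcases lt_or_ge k n with hk | hk
  · rw [← AdjoinRoot.mk_X, ← map_pow, topCoeff, LinearMap.comp_apply,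
      AdjoinRoot.modByMonicHom_mk,
      (modByMonic_eq_self_iff (monic_X_pow n)).2 (by simpa [degree_X_pow] using hk)]
    simp only [lcoeff_apply, coeff_X_pow]
    exact if_congr (by omega) rfl rfl
  · rw [root_pow_eq_zero hk, map_zero, if_neg (by omega)]

variable (R n) in
noncomputable def dualEquiv :
    MultCurveLocalRing R n ≃ₗ[R] Module.Dual R (MultCurveLocalRing R n) :=
  (basis R n).equiv (basis R n).dualBasis Fin.revPerm

lemma dualEquiv_apply (a b : MultCurveLocalRing R n) :
    dualEquiv R n a b = topCoeff R n (a * b) := by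
  suffices (dualEquiv R n : _ →ₗ[R] _) = (LinearMap.mul R _).compr₂ (topCoeff R n) from
    LinearMap.congr_fun₂ this a b
  refine (basis R n).ext fun i => (basis R n).ext fun j => ?_
  rw [LinearEquiv.coe_coe, dualEquiv, Module.Basis.equiv_apply, Fin.revPerm_apply,
    Module.Basis.dualBasis_apply_self, LinearMap.compr₂_apply, LinearMap.mul_apply',
    basis_apply, basis_apply, ← pow_add, topCoeff_root_pow]
  exact if_congr (by rw [Fin.ext_iff, Fin.val_rev]; omega) rfl rfl

variable {N : Type*} [AddCommGroup N] [Module (MultCurveLocalRing R n) N] [Module R N]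
  [IsScalarTower R (MultCurveLocalRing R n) N]

noncomputable def dualLift (g : Module.Dual R N) :
    N →ₗ[MultCurveLocalRing R n] MultCurveLocalRing R n where
  toFun m := (dualEquiv R n).symm (g ∘ₗ (LinearMap.toSpanSingleton _ N m).restrictScalars R)
  map_add' m m' := by
    apply (dualEquiv R n).injective
    ext b
    simp [smul_add]
  map_smul' a m := by
    apply (dualEquiv R n).injective
    ext b
    conv_rhs => rw [RingHom.id_apply, smul_eq_mul, dualEquiv_apply, mul_comm a, mul_assoc,
      ← dualEquiv_apply]
    simp only [LinearEquiv.apply_symm_apply, LinearMap.comp_apply,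
      LinearMap.restrictScalars_apply, LinearMap.toSpanSingleton_apply]
    rw [smul_smul, mul_comm]

lemma dualEquiv_dualLift (g : Module.Dual R N) (m : N) (b : MultCurveLocalRing R n) :
    dualEquiv R n (dualLift g m) b = g (b • m) := by
  simp [dualLift]

variable (R n N) in
noncomputable def homEquivDual :
    (N →ₗ[MultCurveLocalRing R n] MultCurveLocalRing R n) ≃ₗ[R] Module.Dual R N where
  toFun f := topCoeff R n ∘ₗ f.restrictScalars R
  invFun := dualLift
  map_add' f f' := by ext; simp
  map_smul' r f := by ext; simp
  left_inv f := by
    ext m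
    apply (dualEquiv R n).injective
    ext b
    rw [dualEquiv_dualLift, dualEquiv_apply]
    simp [mul_comm]
  right_inv g := by
    ext m
    simpa [dualEquiv_apply] using dualEquiv_dualLift g m 1

lemma homEquivDual_apply (f : N →ₗ[MultCurveLocalRing R n] MultCurveLocalRing R n) (m : N) :
    homEquivDual R n N f m = topCoeff R n (f m) := rfl

variable (R n N) in
theorem bijective_dual_eval_iff :
    Function.Bijective (Module.Dual.eval (MultCurveLocalRing R n) N) ↔
      Function.Bijective (Module.Dual.eval R N) := by
  have h : ⇑(Module.Dual.eval (MultCurveLocalRing R n) N) =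
      (homEquivDual R n (Module.Dual _ N)).symm ∘ (homEquivDual R n N).dualMap ∘
        Module.Dual.eval R N := by
    funext m
    rw [Function.comp_apply, LinearEquiv.eq_symm_apply]
    ext f
    simp [homEquivDual_apply]
  rw [h, EquivLike.comp_bijective, EquivLike.comp_bijective]

end MultCurveLocalRing

open MultCurveLocalRing in
theorem torsionFree_reflexive_general (R : Type*) [CommRing R] [IsDomain R] [IsDiscreteValuationRing R]
    (x : R) (hx : Irreducible x) (n : ℕ)
    (M : Type*) [AddCommGroup M] [Module (MultCurveLocalRing R n) M]
    [Module.Finite (MultCurveLocalRing R n) M]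
    (htf : ∀ (m : M) (k : ℕ),
      (algebraMap R (MultCurveLocalRing R n) x) ^ k • m = 0 → m = 0) :
    Function.Bijective (Module.Dual.eval (MultCurveLocalRing R n) M) := by
  let : Module R M := Module.compHom M (algebraMap R (MultCurveLocalRing R n))
  have : IsScalarTower R (MultCurveLocalRing R n) M := .of_algebraMap_smul fun _ _ => rfl
  have : Module.Finite R (MultCurveLocalRing R n) := (monic_X_pow n).finite_adjoinRoot
  have : Module.Finite R M := .trans (MultCurveLocalRing R n) M
  have : Module.IsTorsionFree R M := .of_irreducible_pow_smul_eq_zero hx fun m k h =>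
    htf m k (by rwa [← map_pow, algebraMap_smul])
  exact (bijective_dual_eval_iff R n M).2 (Module.bijective_dual_eval R M)

/-- Over `A = R[z]/(z^n)` with `R` a DVR with uniformizer `x`, every finitely generated
torsion-free (no nonzero element killed by a power of `x`) module is reflexive. -/
theorem torsionFree_reflexive (R : Type*) [CommRing R] [IsDomain R] [IsDiscreteValuationRing R]
    (x : R) (hx : Irreducible x) (n : ℕ) (hn : 1 ≤ n)
    (M : Type*) [AddCommGroup M] [Module (MultCurveLocalRing R n) M]
    [Module.Finite (MultCurveLocalRing R n) M]
    (htf : ∀ (m : M) (k : ℕ),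
      (algebraMap R (MultCurveLocalRing R n) x) ^ k • m = 0 → m = 0) :
    Function.Bijective (Module.Dual.eval (MultCurveLocalRing R n) M) :=
  torsionFree_reflexive_general R x hx n M htf
end

section
/- Let R be a discrete valuation ring with uniformizer x, n ≥ 1, and A = R[z]/(z^n). Let M be a finitely generated A-module. Then M is torsion-free (no nonzero element of M is killed by a power of x) if and only if the R-module M^{(1)} = { m ∈ M : z m = 0 } is a free R-module. -/
open Polynomial

/-- The class of `z` in `R[z]/(z^n)`. -/
noncomputable abbrev MultCurveLocalRing.z (R : Type*) [CommRing R] (n : ℕ) :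
    MultCurveLocalRing R n :=
  AdjoinRoot.root (X ^ n : R[X])

/-!
Over a DVR, `M` is torsion-free iff no power of the uniformizer kills a nonzero element, and a
finitely generated torsion-free module is free. Since `z` is nilpotent, every nonzero `m` has a
nonzero multiple `z ^ i • m` in `M^{(1)}`, and the action of `R` commutes with that of `z`; so `M`
is torsion-free exactly when `M^{(1)}` is. Finiteness over `R` comes from `A` being finite over `R`.
-/

open Module Submodule

theorem MultCurveLocalRing.isNilpotent_z (R : Type*) [CommRing R] (n : ℕ) :
    IsNilpotent (z R n) :=
  ⟨n, by rw [z, ← AdjoinRoot.mk_X, ← map_pow, AdjoinRoot.mk_self]⟩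

theorem IsDiscreteValuationRing.isTorsionFree_iff_pow_smul_eq_zero {R M : Type*} [CommRing R]
    [IsDomain R] [IsDiscreteValuationRing R] [AddCommGroup M] [Module R M] {x : R}
    (hx : Irreducible x) : IsTorsionFree R M ↔ ∀ (m : M) (k : ℕ), x ^ k • m = 0 → m = 0 := by
  refine ⟨fun _ m k ↦ (smul_eq_zero_iff_right (pow_ne_zero k hx.ne_zero)).mp, fun h ↦ ?_⟩
  refine .of_smul_eq_zero fun r m hrm ↦ or_iff_not_imp_left.mpr fun hr ↦ ?_
  obtain ⟨k, u, rfl⟩ := eq_unit_mul_pow_irreducible hr hx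
  exact h m k (by simpa [smul_smul] using congrArg ((↑u⁻¹ : R) • ·) hrm)

theorem exists_pow_smul_mem_torsionBy_ne_zero {A M : Type*} [CommRing A] [AddCommGroup M]
    [Module A M] {z : A} (hz : IsNilpotent z) {m : M} (hm : m ≠ 0) :
    ∃ i : ℕ, z ^ i • m ∈ torsionBy A M z ∧ z ^ i • m ≠ 0 := by
  obtain ⟨k, hk⟩ := hz
  have hkm : z ^ k • m = 0 := by rw [hk, zero_smul]
  clear hk
  induction k generalizing m with
  | zero => exact absurd (by simpa using hkm) hm
  | succ k ih =>
    by_cases hzm : z • m = 0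
    · exact ⟨0, by simpa using hzm, by simpa using hm⟩
    · obtain ⟨i, hi⟩ := ih hzm (by rw [← mul_smul, ← pow_succ, hkm])
      exact ⟨i + 1, by simpa only [pow_succ, mul_smul] using hi⟩

theorem isSMulRegular_iff_torsionBy_of_isNilpotent {R A M : Type*} [CommRing R] [CommRing A]
    [Algebra R A] [AddCommGroup M] [Module A M] [Module R M] [IsScalarTower R A M] {z : A}
    (hz : IsNilpotent z) (r : R) :
    IsSMulRegular M r ↔ IsSMulRegular ((torsionBy A M z).restrictScalars R) r := by
  refine ⟨IsSMulRegular.submodule _ r, fun h ↦ ?_⟩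
  simp only [isSMulRegular_iff_right_eq_zero_of_smul] at h ⊢
  intro m hrm
  by_contra hm
  obtain ⟨i, hmem, hne⟩ := exists_pow_smul_mem_torsionBy_ne_zero hz hm
  exact hne (congrArg Subtype.val (h ⟨_, hmem⟩ (Subtype.ext (by simp [smul_comm r, hrm]))))

theorem isTorsionFree_iff_torsionBy_of_isNilpotent {R A M : Type*} [CommRing R] [CommRing A]
    [Algebra R A] [AddCommGroup M] [Module A M] [Module R M] [IsScalarTower R A M] {z : A}
    (hz : IsNilpotent z) :
    IsTorsionFree R M ↔ IsTorsionFree R ((torsionBy A M z).restrictScalars R) := by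
  constructor <;> refine fun ⟨h⟩ ↦ ⟨fun r hr ↦ ?_⟩
  · exact (isSMulRegular_iff_torsionBy_of_isNilpotent hz r).mp (h hr)
  · exact (isSMulRegular_iff_torsionBy_of_isNilpotent hz r).mpr (h hr)

theorem torsionFree_iff_free_general (R : Type*) [CommRing R] [IsDomain R] [IsDiscreteValuationRing R]
    (x : R) (hx : Irreducible x) (n : ℕ)
    (M : Type*) [AddCommGroup M] [Module (MultCurveLocalRing R n) M]
    [Module R M] [IsScalarTower R (MultCurveLocalRing R n) M]
    [Module.Finite (MultCurveLocalRing R n) M] :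
    (∀ (m : M) (k : ℕ),
        (algebraMap R (MultCurveLocalRing R n) x) ^ k • m = 0 → m = 0) ↔
      Module.Free R
        (Submodule.restrictScalars R
          (Submodule.torsionBy (MultCurveLocalRing R n) M (MultCurveLocalRing.z R n))) := by
  have : Module.Finite R (MultCurveLocalRing R n) := (monic_X_pow n).finite_adjoinRoot
  have : Module.Finite R M := .trans (MultCurveLocalRing R n) M
  simp only [← map_pow, algebraMap_smul]
  rw [← IsDiscreteValuationRing.isTorsionFree_iff_pow_smul_eq_zero hx,
    isTorsionFree_iff_torsionBy_of_isNilpotent (MultCurveLocalRing.isNilpotent_z R n),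
    Module.free_iff_isTorsionFree]

/-- Over `A = R[z]/(z^n)` with `R` a DVR with uniformizer `x`, a finitely generated module `M`
is torsion-free iff `M^{(1)} = { m : z • m = 0 }` is a free `R`-module. -/
theorem torsionFree_iff_free (R : Type*) [CommRing R] [IsDomain R] [IsDiscreteValuationRing R]
    (x : R) (hx : Irreducible x) (n : ℕ) (hn : 1 ≤ n)
    (M : Type*) [AddCommGroup M] [Module (MultCurveLocalRing R n) M]
    [Module R M] [IsScalarTower R (MultCurveLocalRing R n) M]
    [Module.Finite (MultCurveLocalRing R n) M] :
    (∀ (m : M) (k : ℕ),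
        (algebraMap R (MultCurveLocalRing R n) x) ^ k • m = 0 → m = 0) ↔
      Module.Free R
        (Submodule.restrictScalars R
          (Submodule.torsionBy (MultCurveLocalRing R n) M (MultCurveLocalRing.z R n))) :=
  torsionFree_iff_free_general R x hx n M
end

section
/- Let R be a discrete valuation ring, and let n, k, a be integers with a ≥ 1 and 1 ≤ k < n − 1. Let A = R[z]/(z^n), M = A^a ⊕ (A/(z^k)), and N = M/z^{n−1}M ≅ (A/(z^{n−1}))^a ⊕ (A/(z^k)). Let λ : ann_M(z) → ann_N(z) be the map induced by the projection M → N. Then ann_N(z) = im(λ) ⊕ z^{n−2}N, i.e. the submodule { u ∈ N : zu = 0 } is the internal direct sum of the image of λ and of z^{n−2}N. -/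
open Polynomial

/-- The stalk `M = A^a ⊕ A/(z^k)` of a quasi locally free sheaf of rigid type. -/
noncomputable abbrev RigidStalk (R : Type*) [CommRing R] (n k a : ℕ) : Type _ :=
  (Fin a → MultCurveLocalRing R n) ×
    (MultCurveLocalRing R n ⧸ Ideal.span {MultCurveLocalRing.z R n ^ k})

/-!
Write `N = M/z^{m+1}M` and `π : M → N`. If `zπ(x) = 0`, say `zx = z^{m+1}y`, then `x - z^m y` is
killed by `z`, so `π(x) = π(x - z^m y) + z^m π(y)`: the sum is all of `ann_N(z)` for every module
`M`. The intersection is trivial as soon as `ann_M(z) ∩ z^m M ⊆ z^{m+1} M`, which holds for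
`M = A^a ⊕ A/(z^k)` because `ann_A(z) = z^{n-1}A` and `z^m` kills `A/(z^k)` when `k ≤ m = n - 2`.
-/

namespace Submodule

open LinearMap

variable {A M : Type*} [CommRing A] [AddCommGroup M] [Module A M] (z : A) (m : ℕ)

theorem map_mkQ_torsionBy_sup_range_pow :
    (torsionBy A M z).map (range (lsmul A M (z ^ (m + 1)))).mkQ ⊔
        range (lsmul A (M ⧸ range (lsmul A M (z ^ (m + 1)))) (z ^ m)) =
      torsionBy A _ z := by
  apply le_antisymm
  · refine sup_le ?_ ?_
    · rintro _ ⟨x, hx, rfl⟩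
      rw [SetLike.mem_coe, mem_torsionBy_iff] at hx
      rw [mem_torsionBy_iff, ← map_smul, hx, map_zero]
    · rintro _ ⟨u, rfl⟩
      obtain ⟨y, rfl⟩ := mkQ_surjective _ u
      rw [mem_torsionBy_iff, lsmul_apply, smul_smul, ← pow_succ', ← map_smul, mkQ_apply,
        Quotient.mk_eq_zero]
      exact ⟨y, rfl⟩
  · intro u hu
    obtain ⟨x, rfl⟩ := mkQ_surjective _ u
    rw [mem_torsionBy_iff, ← map_smul, mkQ_apply, Quotient.mk_eq_zero] at hu
    obtain ⟨y, hy⟩ := hu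
    have hxy : x - z ^ m • y ∈ torsionBy A M z := by
      rw [mem_torsionBy_iff, smul_sub, smul_smul, ← pow_succ']
      exact sub_eq_zero.2 hy.symm
    refine mem_sup.2 ⟨_, mem_map_of_mem hxy, _, ⟨mkQ _ y, rfl⟩, ?_⟩
    rw [lsmul_apply, ← map_smul, ← map_add, sub_add_cancel]

theorem map_mkQ_torsionBy_inf_range_pow_eq_bot
    (h : torsionBy A M z ⊓ range (lsmul A M (z ^ m)) ≤ range (lsmul A M (z ^ (m + 1)))) :
    (torsionBy A M z).map (range (lsmul A M (z ^ (m + 1)))).mkQ ⊓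
        range (lsmul A (M ⧸ range (lsmul A M (z ^ (m + 1)))) (z ^ m)) = ⊥ := by
  rw [eq_bot_iff]
  rintro _ ⟨⟨x, hx, rfl⟩, ⟨u, hu⟩⟩
  obtain ⟨y, rfl⟩ := mkQ_surjective _ u
  rw [lsmul_apply, ← map_smul, mkQ_apply, mkQ_apply, Quotient.eq] at hu
  obtain ⟨w, hw⟩ := hu
  have hx' : x ∈ range (lsmul A M (z ^ m)) :=
    ⟨y - z • w, by
      rw [lsmul_apply] at hw ⊢
      rw [smul_sub, smul_smul, ← pow_succ, hw, sub_sub_cancel]⟩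
  obtain ⟨v, rfl⟩ := h ⟨hx, hx'⟩
  rw [mem_bot, mkQ_apply, Quotient.mk_eq_zero]
  exact ⟨v, rfl⟩

variable {z m}

theorem torsionBy_inf_range_pow_le_prod {F Q : Type*} [AddCommGroup F] [Module A F]
    [AddCommGroup Q] [Module A Q] (hF : torsionBy A F z ≤ range (lsmul A F (z ^ (m + 1))))
    (hQ : Module.IsTorsionBy A Q (z ^ m)) :
    torsionBy A (F × Q) z ⊓ range (lsmul A (F × Q) (z ^ m)) ≤
      range (lsmul A (F × Q) (z ^ (m + 1))) := by
  rintro ⟨f, q⟩ ⟨hx, ⟨⟨f', q'⟩, hq⟩⟩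
  rw [SetLike.mem_coe, mem_torsionBy_iff, Prod.smul_mk, Prod.mk_eq_zero] at hx
  obtain ⟨w, hw⟩ := hF ((mem_torsionBy_iff _ _).2 hx.1)
  refine ⟨(w, 0), Prod.ext hw ?_⟩
  simpa [@hQ q'] using congrArg Prod.snd hq

theorem torsionBy_pi_le_range_pow {ι : Type*} (hA : ∀ x : A, z * x = 0 → z ^ m ∣ x) :
    torsionBy A (ι → A) z ≤ range (lsmul A (ι → A) (z ^ m)) := by
  intro f hf
  rw [mem_torsionBy_iff] at hf
  choose w hw using fun i ↦ hA (f i) (congrFun hf i)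
  exact ⟨w, funext fun i ↦ (hw i).symm⟩

end Submodule

theorem AdjoinRoot.root_pow_dvd_of_root_mul_eq_zero {R : Type*} [CommRing R] (m : ℕ)
    {x : AdjoinRoot (X ^ (m + 1) : R[X])} (hx : root (X ^ (m + 1) : R[X]) * x = 0) :
    root (X ^ (m + 1) : R[X]) ^ m ∣ x := by
  obtain ⟨f, rfl⟩ := mk_surjective x
  rw [← mk_X, ← map_mul, mk_eq_zero, pow_succ'] at hx
  obtain ⟨c, hc⟩ := hx
  have hf : f = X ^ m * c := isRegular_X.left (hc.trans (mul_assoc _ _ _))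
  exact ⟨mk _ c, by rw [hf, map_mul, map_pow, mk_X]⟩

theorem Ideal.Quotient.isTorsionBy_pow {A : Type*} [CommRing A] (z : A) {k j : ℕ} (hkj : k ≤ j) :
    Module.IsTorsionBy A (A ⧸ Ideal.span {z ^ k}) (z ^ j) :=
  (Module.isTorsionBy_quotient_iff _ _).2 fun x ↦
    Ideal.mem_span_singleton.2 ((pow_dvd_pow z hkj).mul_right x)

theorem restriction_splits_general (R : Type*) [CommRing R]
    (n k a : ℕ) (hk : k < n - 1) :
    ∀ (π : RigidStalk R n k a →ₗ[MultCurveLocalRing R n]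
        ((RigidStalk R n k a) ⧸
          LinearMap.range
            (LinearMap.lsmul (MultCurveLocalRing R n) (RigidStalk R n k a)
              (MultCurveLocalRing.z R n ^ (n - 1))))),
      π = Submodule.mkQ _ →
      Submodule.map π
          (Submodule.torsionBy (MultCurveLocalRing R n) (RigidStalk R n k a)
            (MultCurveLocalRing.z R n)) ⊔
        LinearMap.range
          (LinearMap.lsmul (MultCurveLocalRing R n) _
            (MultCurveLocalRing.z R n ^ (n - 2))) =
        Submodule.torsionBy (MultCurveLocalRing R n) _ (MultCurveLocalRing.z R n) ∧
      Submodule.map π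
          (Submodule.torsionBy (MultCurveLocalRing R n) (RigidStalk R n k a)
            (MultCurveLocalRing.z R n)) ⊓
        LinearMap.range
          (LinearMap.lsmul (MultCurveLocalRing R n) _
            (MultCurveLocalRing.z R n ^ (n - 2))) = ⊥ := by
  rintro _ rfl
  obtain ⟨m, rfl⟩ : ∃ m, n = m + 2 := ⟨n - 2, by omega⟩
  exact ⟨Submodule.map_mkQ_torsionBy_sup_range_pow _ m,
    Submodule.map_mkQ_torsionBy_inf_range_pow_eq_bot _ m
      (Submodule.torsionBy_inf_range_pow_le_prod
        (Submodule.torsionBy_pi_le_range_pow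
          fun _ ↦ AdjoinRoot.root_pow_dvd_of_root_mul_eq_zero _)
        (Ideal.Quotient.isTorsionBy_pow _ (by omega)))⟩

/-- For `M = A^a ⊕ A/(z^k)` over `A = R[z]/(z^n)` (`a ≥ 1`, `1 ≤ k < n−1`) and
`N = M/z^{n−1}M`, the annihilator of `z` in `N` is the internal direct sum of the image under
the projection `λ` of `ann_M(z)` and of `z^{n−2}N`. -/
theorem restriction_splits (R : Type*) [CommRing R] [IsDomain R] [IsDiscreteValuationRing R]
    (n k a : ℕ) (ha : 1 ≤ a) (hk1 : 1 ≤ k) (hk : k < n - 1) :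
    ∀ (π : RigidStalk R n k a →ₗ[MultCurveLocalRing R n]
        ((RigidStalk R n k a) ⧸
          LinearMap.range
            (LinearMap.lsmul (MultCurveLocalRing R n) (RigidStalk R n k a)
              (MultCurveLocalRing.z R n ^ (n - 1))))),
      π = Submodule.mkQ _ →
      Submodule.map π
          (Submodule.torsionBy (MultCurveLocalRing R n) (RigidStalk R n k a)
            (MultCurveLocalRing.z R n)) ⊔
        LinearMap.range
          (LinearMap.lsmul (MultCurveLocalRing R n) _
            (MultCurveLocalRing.z R n ^ (n - 2))) =
        Submodule.torsionBy (MultCurveLocalRing R n) _ (MultCurveLocalRing.z R n) ∧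
      Submodule.map π
          (Submodule.torsionBy (MultCurveLocalRing R n) (RigidStalk R n k a)
            (MultCurveLocalRing.z R n)) ⊓
        LinearMap.range
          (LinearMap.lsmul (MultCurveLocalRing R n) _
            (MultCurveLocalRing.z R n ^ (n - 2))) = ⊥ :=
  restriction_splits_general R n k a hk
end

section
/- Let R be a discrete valuation ring with uniformizer x and residue-characteristic-independent quotient, n ≥ 2, and A = R[z]/(z^n). Let I = (x, z) ⊆ A. Then: (1) every element of I can be written ax + bz with a, b ∈ A, and the class of a in A/(z) ≅ R depends only on the element ax + bz (not on the representation); (2) the resulting A-linear map φ : I → A/(z), ax + bz ↦ a mod (z), is surjective with kernel exactly zA, giving an exact sequence 0 → zA → I → A/(z) → 0. -/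
/-!
Reduction modulo `z` maps `I = (x, z)` into `x · (A ⧸ (z))`, and since `x` is a nonzerodivisor on
`A ⧸ (z) ≅ R`, multiplication by `x` is an isomorphism of `A ⧸ (z)` onto that submodule. Hence
`φ` = "reduce modulo `z`, then divide by `x`" is a well-defined `A`-linear map sending `ax + bz` to
`a mod z`; it is onto because `φ (ax) = a mod z`, and `φ u = 0` iff `u mod z = 0`.
-/

open Polynomial

namespace Ideal

variable {A : Type*} [CommRing A] {x z : A}

theorem smul_mk_eq_mk_mul_add_mul (a b : A) :
    x • Quotient.mk (span {z}) a = Submodule.Quotient.mk (a * x + b * z) := by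
  have hz : Quotient.mk (span {z}) z = 0 :=
    Quotient.eq_zero_iff_mem.mpr (mem_span_singleton_self z)
  simp [Algebra.smul_def, hz, mul_comm]

theorem mkQ_mem_range_lsmul_of_mem_span_pair {u : A} (hu : u ∈ span {x, z}) :
    (span {z}).mkQ u ∈ LinearMap.range (LinearMap.lsmul A (A ⧸ span {z}) x) := by
  obtain ⟨a, b, rfl⟩ := mem_span_pair.mp hu
  exact ⟨Submodule.Quotient.mk a, smul_mk_eq_mk_mul_add_mul a b⟩

/-- `a x + b z ↦ a mod z`. -/
noncomputable def spanPairDivFst (hx : IsSMulRegular (A ⧸ span {z}) x) :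
    span {x, z} →ₗ[A] A ⧸ span {z} :=
  (LinearEquiv.ofInjective (LinearMap.lsmul A (A ⧸ span {z}) x) hx).symm.toLinearMap ∘ₗ
    ((span {z}).mkQ ∘ₗ (span {x, z}).subtype).codRestrict _
      fun u => mkQ_mem_range_lsmul_of_mem_span_pair u.2

section

variable (hx : IsSMulRegular (A ⧸ span {z}) x)

theorem smul_spanPairDivFst (u : span {x, z}) :
    x • spanPairDivFst hx u = Submodule.Quotient.mk (u : A) :=
  congr_arg Subtype.val ((LinearEquiv.ofInjective (LinearMap.lsmul A _ x) hx).apply_symm_apply _)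

theorem spanPairDivFst_eq_iff {u : span {x, z}} {q : A ⧸ span {z}} :
    spanPairDivFst hx u = q ↔ x • q = Submodule.Quotient.mk (u : A) := by
  rw [← smul_spanPairDivFst hx, eq_comm]
  exact hx.eq_iff.symm

theorem spanPairDivFst_mul_add_mul {a b : A} (h : a * x + b * z ∈ span {x, z}) :
    spanPairDivFst hx ⟨a * x + b * z, h⟩ = Quotient.mk (span {z}) a :=
  (spanPairDivFst_eq_iff hx).mpr (smul_mk_eq_mk_mul_add_mul a b)

theorem spanPairDivFst_surjective : Function.Surjective (spanPairDivFst hx) := by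
  intro q
  obtain ⟨a, rfl⟩ := Quotient.mk_surjective q
  have h : a * x + 0 * z ∈ span {x, z} := mem_span_pair.mpr ⟨a, 0, rfl⟩
  exact ⟨_, spanPairDivFst_mul_add_mul hx h⟩

theorem ker_spanPairDivFst :
    LinearMap.ker (spanPairDivFst hx) = Submodule.comap (span {x, z}).subtype (span {z}) := by
  ext u
  rw [LinearMap.mem_ker, spanPairDivFst_eq_iff, smul_zero, eq_comm, Submodule.Quotient.mk_eq_zero]
  rfl

end

theorem mk_eq_of_mul_add_mul_eq (hx : IsSMulRegular (A ⧸ span {z}) x) {a b a' b' : A}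
    (h : a * x + b * z = a' * x + b' * z) :
    Quotient.mk (span {z}) a = Quotient.mk (span {z}) a' := by
  have hmem : a * x + b * z ∈ span {x, z} := mem_span_pair.mpr ⟨a, b, rfl⟩
  rw [← spanPairDivFst_mul_add_mul hx hmem, ← spanPairDivFst_mul_add_mul hx (h ▸ hmem)]
  simp_rw [h]

end Ideal

namespace MultCurveLocalRing

variable {R : Type*} [CommRing R] {n : ℕ}

/-- Restriction to the reduced curve: the retraction `A → A ⧸ (z) ≅ R` sending `z` to `0`. -/
noncomputable def evalZero (hn : n ≠ 0) : MultCurveLocalRing R n →+* R :=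
  AdjoinRoot.lift (RingHom.id R) 0 (by simp [hn])

theorem evalZero_mk (hn : n ≠ 0) (p : R[X]) : evalZero hn (AdjoinRoot.mk _ p) = p.coeff 0 := by
  rw [evalZero, AdjoinRoot.lift_mk, eval₂_at_zero, RingHom.id_apply]

theorem evalZero_algebraMap (hn : n ≠ 0) (r : R) : evalZero hn (algebraMap R _ r) = r := by
  rw [AdjoinRoot.algebraMap_eq, evalZero, AdjoinRoot.lift_of, RingHom.id_apply]

theorem evalZero_eq_zero_iff (hn : n ≠ 0) {c : MultCurveLocalRing R n} :
    evalZero hn c = 0 ↔ c ∈ Ideal.span {z R n} := by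
  obtain ⟨p, rfl⟩ := AdjoinRoot.mk_surjective c
  rw [evalZero_mk, ← X_dvd_iff, Ideal.mem_span_singleton]
  constructor
  · rintro ⟨q, rfl⟩
    exact ⟨AdjoinRoot.mk _ q, by rw [map_mul, AdjoinRoot.mk_X]⟩
  · rintro ⟨d, hd⟩
    rw [X_dvd_iff, ← evalZero_mk hn, hd, map_mul, evalZero, AdjoinRoot.lift_root, zero_mul]

theorem isSMulRegular_algebraMap (hn : n ≠ 0) {r : R} (hr : IsSMulRegular R r) :
    IsSMulRegular (MultCurveLocalRing R n ⧸ Ideal.span {z R n})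
      (algebraMap R (MultCurveLocalRing R n) r) := by
  refine IsSMulRegular.of_right_eq_zero_of_smul fun q hq => ?_
  obtain ⟨c, rfl⟩ := Ideal.Quotient.mk_surjective q
  rw [Algebra.smul_def, Ideal.Quotient.algebraMap_eq, ← map_mul, Ideal.Quotient.eq_zero_iff_mem,
    ← evalZero_eq_zero_iff hn, map_mul, evalZero_algebraMap] at hq
  rw [Ideal.Quotient.eq_zero_iff_mem, ← evalZero_eq_zero_iff hn]
  exact hr.right_eq_zero_of_smul hq

end MultCurveLocalRing

theorem ideal_point_sequence_general (R : Type*) [CommRing R] [IsDomain R]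
    (ϖ : R) (hϖ : Irreducible ϖ) (n : ℕ) (hn : 2 ≤ n) :
    ∀ (x z : MultCurveLocalRing R n), x = algebraMap R (MultCurveLocalRing R n) ϖ →
      z = MultCurveLocalRing.z R n →
    ∀ (I : Ideal (MultCurveLocalRing R n)), I = Ideal.span {x, z} →
    (∀ u ∈ I, ∃ a b : MultCurveLocalRing R n, u = a * x + b * z) ∧
    (∀ a b a' b' : MultCurveLocalRing R n, a * x + b * z = a' * x + b' * z →
      Ideal.Quotient.mk (Ideal.span {z}) a = Ideal.Quotient.mk (Ideal.span {z}) a') ∧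
    (∃ φ : I →ₗ[MultCurveLocalRing R n]
        (MultCurveLocalRing R n ⧸ (Ideal.span {z} : Ideal (MultCurveLocalRing R n))),
      (∀ (a b : MultCurveLocalRing R n) (h : a * x + b * z ∈ I),
        φ ⟨a * x + b * z, h⟩ = Ideal.Quotient.mk (Ideal.span {z}) a) ∧
      Function.Surjective φ ∧
      LinearMap.ker φ =
        Submodule.comap (Submodule.subtype I)
          (Ideal.span {z} : Ideal (MultCurveLocalRing R n))) := by
  rintro x z rfl rfl I rfl
  have hx := MultCurveLocalRing.isSMulRegular_algebraMap (by omega : n ≠ 0)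
    (IsRegular.of_ne_zero hϖ.ne_zero).left.isSMulRegular
  refine ⟨fun u hu => ?_, fun a b a' b' => Ideal.mk_eq_of_mul_add_mul_eq hx,
    Ideal.spanPairDivFst hx, fun a b => Ideal.spanPairDivFst_mul_add_mul hx,
    Ideal.spanPairDivFst_surjective hx, Ideal.ker_spanPairDivFst hx⟩
  obtain ⟨a, b, hab⟩ := Ideal.mem_span_pair.mp hu
  exact ⟨a, b, hab.symm⟩

/-- In `A = R[z]/(z^n)` with `R` a DVR with uniformizer `ϖ`, `x = ϖ` and `z` as above, every
element of `I = (x, z)` is of the form `ax + bz`, the class of `a` in `A/(z)` depends only on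
the element, and the resulting `A`-linear map `φ : I → A/(z)`, `ax + bz ↦ a mod (z)`, is
surjective with kernel `I ∩ zA`, giving an exact sequence `0 → zA → I → A/(z) → 0`. -/
theorem ideal_point_sequence (R : Type*) [CommRing R] [IsDomain R] [IsDiscreteValuationRing R]
    (ϖ : R) (hϖ : Irreducible ϖ) (n : ℕ) (hn : 2 ≤ n) :
    ∀ (x z : MultCurveLocalRing R n), x = algebraMap R (MultCurveLocalRing R n) ϖ →
      z = MultCurveLocalRing.z R n →
    ∀ (I : Ideal (MultCurveLocalRing R n)), I = Ideal.span {x, z} →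
    (∀ u ∈ I, ∃ a b : MultCurveLocalRing R n, u = a * x + b * z) ∧
    (∀ a b a' b' : MultCurveLocalRing R n, a * x + b * z = a' * x + b' * z →
      Ideal.Quotient.mk (Ideal.span {z}) a = Ideal.Quotient.mk (Ideal.span {z}) a') ∧
    (∃ φ : I →ₗ[MultCurveLocalRing R n]
        (MultCurveLocalRing R n ⧸ (Ideal.span {z} : Ideal (MultCurveLocalRing R n))),
      (∀ (a b : MultCurveLocalRing R n) (h : a * x + b * z ∈ I),
        φ ⟨a * x + b * z, h⟩ = Ideal.Quotient.mk (Ideal.span {z}) a) ∧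
      Function.Surjective φ ∧
      LinearMap.ker φ =
        Submodule.comap (Submodule.subtype I)
          (Ideal.span {z} : Ideal (MultCurveLocalRing R n))) :=
  ideal_point_sequence_general R ϖ hϖ n hn
end
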